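/- arXiv:2007.07079 — 8 statements merged into one kernel-verified Lean document; each statement's English description precedes it below -/
import Mathlib

section
/- For f(x) = 1/log₂(x+1) and any even integer d ≥ 2, the sum ∑_{j=1}^{d/2} (f(j) − f(j + d/2)) is at least d / (16 · log₂²(d)). -/
/-!
Write `m = d / 2` and `L = log₂(d + 1)`. For `1 ≤ j ≤ m` both logarithms in the `j`-th term lie
in `(0, L]`, and their difference is `log₂((j + m + 1) / (j + 1)) ≥ log₂(3/2) ≥ 1/2`, so the term
`(b - a) / (a b)` is at least `1 / (2 L²)`. Summing gives `m / (2 L²)`, and `L ≤ 2 log₂ d` because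
`d + 1 ≤ d²`.
-/

open Real

lemma inv_logb_sub_inv_logb_ge {b u v w : ℝ} (hb : 1 < b) (hu : 1 < u) (huv : u ≤ v)
    (hvw : v ≤ w) : logb b (v / u) / logb b w ^ 2 ≤ 1 / logb b u - 1 / logb b v := by
  have hu0 : 0 < u := by linarith
  have hlu : 0 < logb b u := logb_pos hb hu
  have hluv : logb b u ≤ logb b v := logb_le_logb_of_le hb hu0 huv
  have hlvw : logb b v ≤ logb b w := logb_le_logb_of_le hb (by linarith) hvw
  rw [logb_div (by linarith) (by linarith), div_sub_div _ _ hlu.ne' (by linarith), one_mul,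
    mul_one]
  exact div_le_div₀ (by linarith) le_rfl (mul_pos hlu (by linarith)) (by nlinarith)

lemma half_le_logb_two {r : ℝ} (hr : 3 / 2 ≤ r) : 1 / 2 ≤ logb 2 r := by
  rw [le_logb_iff_rpow_le one_lt_two (by linarith), ← sqrt_eq_rpow]
  nlinarith [sq_sqrt (zero_le_two : (0 : ℝ) ≤ 2), sqrt_nonneg 2]

lemma logb_add_one_le_two_mul_logb {b x : ℝ} (hb : 1 < b) (hx : 2 ≤ x) :
    logb b (x + 1) ≤ 2 * logb b x := by
  calc logb b (x + 1) ≤ logb b (x ^ 2) := logb_le_logb_of_le hb (by linarith) (by nlinarith)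
    _ = 2 * logb b x := by rw [logb_pow, Nat.cast_ofNat]

lemma one_div_two_mul_sq_le_inv_logb_sub {x y : ℝ} (hx : 1 ≤ x) (hxy : x ≤ y) :
    1 / (2 * logb 2 (2 * y + 1) ^ 2) ≤ 1 / logb 2 (x + 1) - 1 / logb 2 (x + y + 1) := by
  have hratio : 1 / 2 ≤ logb 2 ((x + y + 1) / (x + 1)) := by
    apply half_le_logb_two
    rw [le_div_iff₀ (by linarith)]
    linarith
  calc 1 / (2 * logb 2 (2 * y + 1) ^ 2)
      = (1 / 2) / logb 2 (2 * y + 1) ^ 2 := by ring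
    _ ≤ logb 2 ((x + y + 1) / (x + 1)) / logb 2 (2 * y + 1) ^ 2 := by gcongr
    _ ≤ 1 / logb 2 (x + 1) - 1 / logb 2 (x + y + 1) :=
      inv_logb_sub_inv_logb_ge one_lt_two (by linarith) (by linarith) (by linarith)

theorem stmt_0 (d : ℕ) (hd : 2 ≤ d) (hev : Even d) :
    (∑ j ∈ Finset.Icc 1 (d / 2),
        (1 / Real.logb 2 ((j : ℝ) + 1) - 1 / Real.logb 2 ((j : ℝ) + (d / 2 : ℕ) + 1)))
      ≥ (d : ℝ) / (16 * (Real.logb 2 d) ^ 2) := by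
  set m := d / 2
  have hdm : (d : ℝ) = 2 * m := by norm_cast; exact (Nat.two_mul_div_two_of_even hev).symm
  have hdR : (2 : ℝ) ≤ d := by exact_mod_cast hd
  set L := logb 2 (2 * (m : ℝ) + 1)
  have hL : 0 < L := logb_pos one_lt_two (by linarith)
  have hLd : L ≤ 2 * logb 2 d := hdm ▸ logb_add_one_le_two_mul_logb one_lt_two (hdm ▸ hdR)
  have hsum : (m : ℝ) / (2 * L ^ 2) ≤ ∑ j ∈ Finset.Icc 1 m,
      (1 / logb 2 ((j : ℝ) + 1) - 1 / logb 2 ((j : ℝ) + m + 1)) := by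
    have := Finset.card_nsmul_le_sum (Finset.Icc 1 m) _ _ fun j hj ↦
      one_div_two_mul_sq_le_inv_logb_sub (x := (j : ℝ)) (y := m)
        (by exact_mod_cast (Finset.mem_Icc.mp hj).1) (by exact_mod_cast (Finset.mem_Icc.mp hj).2)
    simpa [div_eq_mul_one_div (m : ℝ)] using this
  refine le_trans ?_ hsum
  calc (d : ℝ) / (16 * logb 2 d ^ 2) = m / (2 * (2 * logb 2 d) ^ 2) := by rw [hdm]; ring
    _ ≤ m / (2 * L ^ 2) := by gcongr
end

section
/- For f(x) = 1/log₂(x+1) and any integer d ≥ 4 that is divisible by 4, the sum ∑_{j=d/4}^{d/2} (f(j) − f(j + d/4 + 1)) is at least d / (32 · log₂²(d)). -/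
/-! Write `d = 4k` and `L = log₂ d`. For `k ≤ j ≤ 2k` the two logarithms `a = log₂ (j+1)` and
`b = log₂ (j+k+2)` satisfy `0 < a ≤ L`, `b ≤ 2L` and, since `j+k+2 ≥ (3/2)(j+1)`,
`b - a ≥ log₂ (3/2) ≥ 1/2`. Hence every summand `1/a - 1/b = (b-a)/(ab)` is at least `1/(4L²)`,
and the `k+1` summands give at least `(k+1)/(4L²) ≥ d/(32L²)`. -/

open Real Finset

lemma le_one_div_sub_one_div {a b A B δ : ℝ} (ha : 0 < a) (haA : a ≤ A) (hbB : b ≤ B)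
    (hδ : 0 ≤ δ) (hab : a + δ ≤ b) : δ / (A * B) ≤ 1 / a - 1 / b := by
  have hb : 0 < b := by linarith
  rw [div_sub_div _ _ ha.ne' hb.ne', one_mul, mul_one]
  exact div_le_div₀ (by linarith) (by linarith) (mul_pos ha hb)
    (mul_le_mul haA hbB hb.le (by linarith))

lemma half_le_logb_two_three_halves : (1 : ℝ) / 2 ≤ logb 2 (3 / 2) := by
  rw [le_logb_iff_rpow_le one_lt_two (by norm_num), ← sqrt_eq_rpow, sqrt_le_left (by norm_num)]
  norm_num

lemma logb_two_add_half_le {x y : ℝ} (hx : 0 < x) (hxy : 3 / 2 * x ≤ y) :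
    logb 2 x + 1 / 2 ≤ logb 2 y := by
  calc logb 2 x + 1 / 2 ≤ logb 2 x + logb 2 (3 / 2) := by
        gcongr; exact half_le_logb_two_three_halves
    _ = logb 2 (3 / 2 * x) := by rw [logb_mul (by norm_num) hx.ne', add_comm]
    _ ≤ logb 2 y := logb_le_logb_of_le one_lt_two (by positivity) hxy

lemma two_le_logb_two_four_mul {k : ℝ} (hk : 1 ≤ k) : 2 ≤ logb 2 (4 * k) := by
  rw [le_logb_iff_rpow_le one_lt_two (by positivity)]
  norm_num; linarith

lemma le_one_div_logb_sub_one_div_logb {k x : ℝ} (hk : 1 ≤ k) (hkx : k ≤ x) (hx : x ≤ 2 * k) :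
    1 / (4 * logb 2 (4 * k) ^ 2) ≤ 1 / logb 2 (x + 1) - 1 / logb 2 (x + k + 1 + 1) := by
  set L := logb 2 (4 * k)
  have hL : 2 ≤ L := two_le_logb_two_four_mul hk
  have ha : 0 < logb 2 (x + 1) := logb_pos one_lt_two (by linarith)
  have haL : logb 2 (x + 1) ≤ L := logb_le_logb_of_le one_lt_two (by linarith) (by linarith)
  have hbL : logb 2 (x + k + 1 + 1) ≤ 2 * L := by
    calc logb 2 (x + k + 1 + 1) ≤ logb 2 ((4 * k) ^ 2) :=
          logb_le_logb_of_le one_lt_two (by linarith) (by nlinarith)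
      _ = 2 * L := by rw [logb_pow]; push_cast; rfl
  have hab := logb_two_add_half_le (x := x + 1) (y := x + k + 1 + 1) (by linarith) (by linarith)
  calc 1 / (4 * L ^ 2) = (1 / 2) / (L * (2 * L)) := by field_simp; ring
    _ ≤ _ := le_one_div_sub_one_div ha haL hbL (by norm_num) hab

theorem stmt_1 (d : ℕ) (hd : 4 ≤ d) (h4 : 4 ∣ d) :
    (∑ j ∈ Finset.Icc (d / 4) (d / 2),
        (1 / Real.logb 2 ((j : ℝ) + 1) - 1 / Real.logb 2 ((j : ℝ) + (d / 4 : ℕ) + 1 + 1)))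
      ≥ (d : ℝ) / (32 * (Real.logb 2 d) ^ 2) := by
  obtain ⟨k, rfl⟩ := h4
  have hk : (1 : ℝ) ≤ k := by exact_mod_cast (by omega : 1 ≤ k)
  rw [show 4 * k / 4 = k by omega, show 4 * k / 2 = 2 * k by omega]
  have hsum := card_nsmul_le_sum (Icc k (2 * k)) _ _ fun j hj ↦
    le_one_div_logb_sub_one_div_logb (x := (j : ℝ)) hk (by exact_mod_cast (mem_Icc.1 hj).1)
      (by exact_mod_cast (mem_Icc.1 hj).2)
  rw [Nat.card_Icc, show 2 * k + 1 - k = k + 1 by omega, nsmul_eq_mul] at hsum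
  have hL := two_le_logb_two_four_mul hk
  push_cast at hsum ⊢
  refine le_trans ?_ hsum
  rw [div_le_iff₀ (by positivity)]
  field_simp
  nlinarith
end

section
/- Let d be divisible by 4 with d ≥ 4. If a permutation π of {1,...,d} is chosen uniformly at random, then the probability that fewer than d/4 of the elements {1,...,d/2} are mapped by π into the set of positions {1,...,d/2} is at least 1/6. -/
/-!
Write `A` for the first half of the ground set, so `#A = #Aᶜ = 2m`, and
`X π = #{j ∈ A | π j ∈ A}`.
Precomposing with a permutation that exchanges `A` and `Aᶜ` turns `X` into `2m - X`, hence
`P(X > m) = P(X < m)`. Double counting the triples `(π, j, k)` with `j ∈ A ∩ π⁻¹A` and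
`k ∈ Aᶜ ∩ π⁻¹Aᶜ` against `(π * swap j k, j, k)` gives
`P(X = m) m² ≤ P(X = m - 1) (m + 1)² ≤ 4 m² P(X < m)`. Therefore
`1 = P(X < m) + P(X = m) + P(X > m) ≤ 6 P(X < m)`.
-/

open Finset

namespace Equiv.Perm

variable {α : Type*} [Fintype α] [DecidableEq α] (A : Finset α)

def overlap (π : Perm α) : ℕ := #{j ∈ A | π j ∈ A}

lemma card_filter_apply_mem (π : Perm α) : #{j | π j ∈ A} = #A :=
  card_equiv π (by simp)

omit [Fintype α] in
lemma overlap_add_card_filter_apply_not_mem (π : Perm α) :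
    overlap A π + #{j ∈ A | π j ∉ A} = #A :=
  card_filter_add_card_filter_not _

lemma overlap_add_card_compl_filter_apply_mem (π : Perm α) :
    overlap A π + #{j ∈ Aᶜ | π j ∈ A} = #A := by
  rw [← card_filter_apply_mem A π,
    ← card_filter_add_card_filter_not (s := {j | π j ∈ A}) (fun j => j ∈ A)]
  unfold overlap
  congr 1 <;> congr 1 <;> ext j <;> simp only [mem_filter, mem_compl, mem_univ, true_and] <;>
    tauto

lemma exists_perm_apply_mem_iff_not_mem (hA : #Aᶜ = #A) :
    ∃ ρ : Perm α, ∀ j, ρ j ∈ A ↔ j ∉ A := by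
  have e : {j // j ∈ A} ≃ {j // j ∉ A} :=
    Fintype.equivOfCardEq (by simpa [card_compl] using hA.symm)
  refine ⟨e.extendSubtype, fun j => ?_⟩
  by_cases hj : j ∈ A
  · simp [hj, e.extendSubtype_mem j hj]
  · simpa [hj] using e.extendSubtype_not_mem j hj

lemma overlap_mul_add_overlap {ρ : Perm α} (hρ : ∀ j, ρ j ∈ A ↔ j ∉ A) (π : Perm α) :
    overlap A (π * ρ) + overlap A π = #A := by
  have hcompl : overlap A (π * ρ) = #{j ∈ Aᶜ | π j ∈ A} := card_equiv ρ fun j => by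
    rw [mem_filter, mem_filter, mem_compl, hρ, not_not]
    rfl
  rw [hcompl, add_comm, overlap_add_card_compl_filter_apply_mem]

lemma card_overlap_lt_eq_card_lt_overlap_add (hA : #Aᶜ = #A) (k : ℕ) :
    #{π : Perm α | overlap A π < k} = #{π | #A < overlap A π + k} := by
  obtain ⟨ρ, hρ⟩ := exists_perm_apply_mem_iff_not_mem A hA
  refine card_equiv (Equiv.mulRight ρ) fun π => ?_
  have := overlap_mul_add_overlap A hρ π
  simp only [mem_filter, mem_univ, true_and, coe_mulRight]
  omega

omit [Fintype α] in
lemma overlap_mul_swap {π : Perm α} {j k : α} (hj : j ∈ A) (hπj : π j ∈ A) (hk : k ∉ A)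
    (hπk : π k ∉ A) : overlap A (π * swap j k) + 1 = overlap A π := by
  have herase : {i ∈ A | (π * swap j k) i ∈ A} = {i ∈ A | π i ∈ A}.erase j := by
    ext i
    simp only [mem_filter, mem_erase, mul_apply, swap_apply_def]
    grind
  rw [overlap, herase, card_erase_add_one (by simp [hj, hπj])]
  rfl

lemma card_compl_filter_apply_not_mem (hA : #Aᶜ = #A) (π : Perm α) :
    #{j ∈ Aᶜ | π j ∉ A} = overlap A π := by
  have hsplit := card_filter_add_card_filter_not (s := Aᶜ) (fun j => π j ∈ A)
  have := overlap_add_card_compl_filter_apply_mem A π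
  omega

lemma card_overlap_eq_succ_mul_le (hA : #Aᶜ = #A) (x : ℕ) :
    #{π : Perm α | overlap A π = x + 1} * (x + 1) ^ 2 ≤
      #{π | overlap A π = x} * (#A - x) ^ 2 := by
  let inPairs (π : Perm α) : Finset (α × α) :=
    {j ∈ A | π j ∈ A} ×ˢ {k ∈ Aᶜ | π k ∉ A}
  let outPairs (σ : Perm α) : Finset (α × α) :=
    {j ∈ A | σ j ∉ A} ×ˢ {k ∈ Aᶜ | σ k ∈ A}
  have card_inPairs : #(({π | overlap A π = x + 1} : Finset (Perm α)).sigma inPairs) =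
      #{π : Perm α | overlap A π = x + 1} * (x + 1) ^ 2 := by
    rw [card_sigma, sum_const_nat fun π hπ => ?_]
    rw [card_product, card_compl_filter_apply_not_mem A hA, sq, ← (mem_filter.1 hπ).2]
    rfl
  have card_outPairs : #(({π | overlap A π = x} : Finset (Perm α)).sigma outPairs) =
      #{π : Perm α | overlap A π = x} * (#A - x) ^ 2 := by
    rw [card_sigma, sum_const_nat fun σ hσ => ?_]
    have h1 := overlap_add_card_filter_apply_not_mem A σ
    have h2 := overlap_add_card_compl_filter_apply_mem A σ
    rw [card_product, sq, ← (mem_filter.1 hσ).2]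
    congr 1 <;> omega
  rw [← card_inPairs, ← card_outPairs]
  refine card_le_card_of_injOn (fun p => ⟨p.1 * swap p.2.1 p.2.2, p.2⟩) ?_ ?_
  · rintro ⟨π, j, k⟩ h
    simp only [coe_sigma, Set.mem_sigma_iff, mem_coe, mem_filter, mem_univ, true_and, inPairs,
      outPairs, mem_product, mem_compl] at h ⊢
    obtain ⟨hπ, ⟨hj, hπj⟩, hk, hπk⟩ := h
    refine ⟨by rw [← overlap_mul_swap A hj hπj hk hπk] at hπ; omega, ?_⟩
    simp [hj, hk, hπj, hπk]
  · rintro ⟨π, j, k⟩ - ⟨π', j', k'⟩ - h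
    simp only [Sigma.mk.injEq, heq_eq_eq, Prod.mk.injEq] at h
    obtain ⟨hπ, rfl, rfl⟩ := h
    rw [mul_right_cancel hπ]

lemma card_perm_le_six_mul_card_overlap_lt (hA : #Aᶜ = #A) {m : ℕ} (hm : #A = 2 * m)
    (hm0 : 0 < m) : Fintype.card (Perm α) ≤ 6 * #{π : Perm α | overlap A π < m} := by
  have hsym : #{π : Perm α | m < overlap A π} = #{π | overlap A π < m} := by
    rw [card_overlap_lt_eq_card_lt_overlap_add A hA, hm]
    congr 1
    ext π
    simp only [mem_filter, mem_univ, true_and]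
    omega
  have hmid : #{π : Perm α | overlap A π = m} ≤ 4 * #{π | overlap A π < m} := by
    obtain ⟨x, rfl⟩ : ∃ x, m = x + 1 := ⟨m - 1, by omega⟩
    have hstep := card_overlap_eq_succ_mul_le A hA x
    rw [hm, show 2 * (x + 1) - x = x + 2 by omega] at hstep
    have hsub : #{π : Perm α | overlap A π = x} ≤ #{π | overlap A π < x + 1} :=
      card_le_card fun π hπ => by
        simp only [mem_filter, mem_univ, true_and] at hπ ⊢
        omega
    have hsq : (x + 2) ^ 2 ≤ 4 * (x + 1) ^ 2 := by nlinarith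
    refine Nat.le_of_mul_le_mul_right (c := (x + 1) ^ 2) ?_ (by positivity)
    calc _ ≤ _ := hstep
      _ ≤ #{π : Perm α | overlap A π < x + 1} * (4 * (x + 1) ^ 2) := Nat.mul_le_mul hsub hsq
      _ = _ := by ring
  have htotal : Fintype.card (Perm α) ≤
      #{π : Perm α | overlap A π < m} + #{π | overlap A π = m} + #{π | m < overlap A π} :=
    calc Fintype.card (Perm α) = #(univ : Finset (Perm α)) := card_univ.symm
      _ ≤ #(univ.filter (overlap A · < m) ∪ univ.filter (overlap A · = m) ∪
            univ.filter (m < overlap A ·)) :=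
          card_le_card fun π _ => by
            simp only [mem_union, mem_filter, mem_univ, true_and]
            omega
      _ ≤ _ := (card_union_le _ _).trans (Nat.add_le_add_right (card_union_le _ _) _)
  omega

end Equiv.Perm

theorem stmt_2 (d : ℕ) (hd : 4 ≤ d) (h4 : 4 ∣ d) :
    ((Finset.univ.filter (fun π : Equiv.Perm (Fin d) =>
        (Finset.univ.filter (fun j : Fin d => j.val < d / 2 ∧ (π j).val < d / 2)).card < d / 4)).card : ℝ)
      / (Nat.factorial d) ≥ 1 / 6 := by
  obtain ⟨m, rfl⟩ := h4
  set A : Finset (Fin (4 * m)) := {k | k.val < 2 * m}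
  have hA : #A = 2 * m := by
    rw [Fin.card_filter_val_lt]
    omega
  have hAc : #Aᶜ = #A := by
    rw [card_compl, Fintype.card_fin, hA]
    omega
  have hoverlap (π : Equiv.Perm (Fin (4 * m))) :
      #{j : Fin (4 * m) | j.val < 4 * m / 2 ∧ (π j).val < 4 * m / 2} =
        Equiv.Perm.overlap A π := by
    rw [Equiv.Perm.overlap, filter_filter]
    simp only [A, mem_filter, mem_univ, true_and, show 4 * m / 2 = 2 * m by omega]
  have hbound := Equiv.Perm.card_perm_le_six_mul_card_overlap_lt A hAc hA (by omega)
  rw [Fintype.card_perm, Fintype.card_fin] at hbound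
  simp only [hoverlap, show 4 * m / 4 = m by omega]
  rw [ge_iff_le, le_div_iff₀ (by positivity)]
  have hbound_real := (Nat.cast_le (α := ℝ)).2 hbound
  push_cast at hbound_real
  linarith
end

section
/- For every integer n ≥ 2 and every p ∈ [0,1], the expectation of the square root of a Binomial(n, p) random variable satisfies ∑_{k=0}^{n} C(n,k) p^k (1−p)^{n−k} √k ≤ n·p·(1−p)^{n−1}·(1 − √2/2) + n·p·(√2/2). -/
/-!
The concave `√` lies below its chord `k ↦ √2 / 2 * k` through `0` and `2` outside `(0, 2)`, so
`√k ≤ √2 / 2 * k` for every natural `k ≠ 1`, with a defect of `1 - √2 / 2` at `k = 1`.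
Averaging against the binomial law gives `E √X ≤ √2 / 2 * E X + (1 - √2 / 2) * P(X = 1)`,
and `E X = n p`, `P(X = 1) = n p (1 - p) ^ (n - 1)`.
-/

open Finset Real

theorem sqrt_natCast_le_of_ne_one {k : ℕ} (hk : k ≠ 1) : √(k : ℝ) ≤ √2 / 2 * k := by
  rcases Nat.lt_or_gt_of_ne hk with hk | hk
  · simp [Nat.lt_one_iff.mp hk]
  · have h2 : (2 : ℝ) ≤ k := by exact_mod_cast hk
    rw [sqrt_le_left (by positivity), mul_pow, div_pow, sq_sqrt zero_le_two]
    nlinarith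

theorem sqrt_natCast_le (k : ℕ) :
    √(k : ℝ) ≤ √2 / 2 * k + if k = 1 then 1 - √2 / 2 else 0 := by
  split_ifs with hk
  · simp [hk]
  · simpa using sqrt_natCast_le_of_ne_one hk

theorem sum_choose_mul_pow_mul_pow_mul_natCast {R : Type*} [CommRing R] (n : ℕ) (p : R) :
    ∑ k ∈ range (n + 1), (n.choose k : R) * p ^ k * (1 - p) ^ (n - k) * k = n * p := by
  simpa [Polynomial.eval_finsetSum, bernsteinPolynomial, mul_comm] using
    congrArg (Polynomial.eval p) (bernsteinPolynomial.sum_smul R n)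

theorem stmt_5_general (n : ℕ) (p : ℝ) (hp0 : 0 ≤ p) (hp1 : p ≤ 1) :
    (∑ k ∈ Finset.range (n + 1),
        (n.choose k : ℝ) * p ^ k * (1 - p) ^ (n - k) * Real.sqrt k)
      ≤ n * p * (1 - p) ^ (n - 1) * (1 - Real.sqrt 2 / 2) + n * p * (Real.sqrt 2 / 2) := by
  set w : ℕ → ℝ := fun k => (n.choose k : ℝ) * p ^ k * (1 - p) ^ (n - k) with hw
  have hq : 0 ≤ 1 - p := by linarith
  have hw1 : w 1 = n * p * (1 - p) ^ (n - 1) := by simp [hw]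
  calc ∑ k ∈ range (n + 1), w k * √k
      ≤ ∑ k ∈ range (n + 1), w k * (√2 / 2 * k + if k = 1 then 1 - √2 / 2 else 0) :=
        sum_le_sum fun k _ => mul_le_mul_of_nonneg_left (sqrt_natCast_le k) (by positivity)
    _ = √2 / 2 * ∑ k ∈ range (n + 1), w k * k +
          ∑ k ∈ range (n + 1), if k = 1 then w k * (1 - √2 / 2) else 0 := by
        simp only [mul_add, sum_add_distrib, mul_sum, mul_ite, mul_zero]
        congr 1
        exact sum_congr rfl fun k _ => by ring
    _ = _ := by
        rw [sum_choose_mul_pow_mul_pow_mul_natCast, sum_ite_eq', hw1]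
        split_ifs with h
        · ring
        · obtain rfl : n = 0 := by simpa using h
          simp

theorem stmt_5 (n : ℕ) (hn : 2 ≤ n) (p : ℝ) (hp0 : 0 ≤ p) (hp1 : p ≤ 1) :
    (∑ k ∈ Finset.range (n + 1),
        (n.choose k : ℝ) * p ^ k * (1 - p) ^ (n - k) * Real.sqrt k)
      ≤ n * p * (1 - p) ^ (n - 1) * (1 - Real.sqrt 2 / 2) + n * p * (Real.sqrt 2 / 2) :=
  stmt_5_general n p hp0 hp1
end

section
/- Let γ(x) = √x, λ ≥ 0, d ≥ 2 an integer, and ε = (1+λ)·e^{e^e}. Then (γ(1) − γ(0))·(1 − 1/ε) − (γ(2) − γ(1))·(1 − 1/(d·ε)) + λ·(2^{1 − 1/ε} − 2^{1 − 1/(d·ε)}) ≥ 1/2. -/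
/-!
With `a = 1 - 1/ε` and `b = 1 - 1/(dε)` we have `0 ≤ b - a ≤ 1/ε`, so by Bernoulli's inequality
`2^b - 2^a = 2^a (2^(b-a) - 1) ≤ 2 (b - a)`. As `λ/ε ≤ 1/E` for `E = e^{e^e}`, the expression is at
least `a - (√2 - 1) - 2/E ≥ 2 - √2 - 3/E`, and `E ≥ 40` makes this exceed `1/2`.
-/

open Real

lemma forty_le_exp_exp_exp_one : 40 ≤ exp (exp (exp 1)) := by
  have h₁ : 2.7 ≤ exp 1 := by linarith [exp_one_gt_d9]
  have h₂ : 7 ≤ exp (exp 1) := by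
    nlinarith [quadratic_le_exp_of_nonneg (exp_pos 1).le]
  have h₃ := pow_div_factorial_le_exp _ (exp_pos (exp 1)).le 3
  have h₄ := pow_le_pow_left₀ (by norm_num) h₂ 3
  norm_num [Nat.factorial] at h₃ h₄
  linarith

lemma two_rpow_sub_two_rpow_le {x y : ℝ} (hx : 0 ≤ x) (hxy : x ≤ y) (hy : y ≤ 1) :
    (2 : ℝ) ^ y - 2 ^ x ≤ 2 * (y - x) := by
  have bernoulli : (2 : ℝ) ^ (y - x) ≤ 1 + (y - x) := by
    simpa [one_add_one_eq_two] using
      rpow_one_add_le_one_add_mul_self (s := 1) (by norm_num) (sub_nonneg.2 hxy) (by linarith)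
  have hx2 : (2 : ℝ) ^ x ≤ 2 := by
    simpa using rpow_le_rpow_of_exponent_le one_le_two (hxy.trans hy)
  calc (2 : ℝ) ^ y - 2 ^ x = 2 ^ x * (2 ^ (y - x) - 1) := by
        rw [mul_sub, ← rpow_add two_pos, add_sub_cancel, mul_one]
    _ ≤ 2 * (y - x) := by
        nlinarith [one_le_rpow one_le_two (sub_nonneg.2 hxy), rpow_pos_of_pos two_pos x]

lemma one_div_natCast_mul_le_one_div (d : ℕ) {ε : ℝ} (hε : 0 ≤ ε) : 1 / (d * ε) ≤ 1 / ε := by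
  rw [one_div, one_div, mul_inv]
  exact mul_le_of_le_one_left (inv_nonneg.2 hε) (Nat.cast_inv_le_one d)

lemma div_one_add_mul_le_one_div {lam E : ℝ} (hlam : 0 ≤ lam) (hE : 0 < E) :
    lam / ((1 + lam) * E) ≤ 1 / E := by
  rw [div_le_div_iff₀ (by positivity) hE]
  nlinarith

theorem stmt_6_general (lam : ℝ) (hlam : 0 ≤ lam) (d : ℕ)
    (eps : ℝ) (heps : eps = (1 + lam) * Real.exp (Real.exp (Real.exp 1))) :
    (Real.sqrt 1 - Real.sqrt 0) * (1 - 1 / eps)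
      - (Real.sqrt 2 - Real.sqrt 1) * (1 - 1 / (d * eps))
      + lam * ((2 : ℝ) ^ (1 - 1 / eps) - (2 : ℝ) ^ (1 - 1 / ((d : ℝ) * eps)))
      ≥ 1 / 2 := by
  set E := exp (exp (exp 1))
  have hE : 40 ≤ E := forty_le_exp_exp_exp_one
  have hepsE : E ≤ eps := by
    rw [heps]; exact le_mul_of_one_le_left (by linarith) (by linarith)
  have heps0 : 0 < eps := by linarith
  have hinv : 1 / eps ≤ 1 / E := one_div_le_one_div_of_le (by linarith) hepsE
  have hE' : 1 / E ≤ 1 / 40 := one_div_le_one_div_of_le (by norm_num) hE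
  have hdinv : 1 / (d * eps) ≤ 1 / eps := one_div_natCast_mul_le_one_div d (by linarith)
  have hdinv0 : 0 ≤ 1 / (d * eps) := by positivity
  have hpow := two_rpow_sub_two_rpow_le (x := 1 - 1 / eps) (y := 1 - 1 / (d * eps))
    (by linarith) (by linarith) (by linarith)
  have hlam_div : lam * (1 / eps) ≤ 1 / E := by
    rw [mul_one_div, heps]; exact div_one_add_mul_le_one_div hlam (by linarith)
  have hsqrt2 : √2 < 1.42 := by rw [sqrt_lt' (by norm_num)]; norm_num
  have hsqrt2' : 1 ≤ √2 := one_le_sqrt.2 one_le_two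
  rw [sqrt_one, sqrt_zero]
  have hmain : (√2 - 1) * (1 - 1 / (d * eps)) ≤ √2 - 1 :=
    mul_le_of_le_one_right (by linarith) (by linarith)
  have hlampow := mul_le_mul_of_nonneg_left hpow hlam
  have hlamterm : lam * (1 / eps - 1 / (d * eps)) ≤ lam * (1 / eps) :=
    mul_le_mul_of_nonneg_left (by linarith) hlam
  linarith

theorem stmt_6 (lam : ℝ) (hlam : 0 ≤ lam) (d : ℕ) (hd : 2 ≤ d)
    (eps : ℝ) (heps : eps = (1 + lam) * Real.exp (Real.exp (Real.exp 1))) :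
    (Real.sqrt 1 - Real.sqrt 0) * (1 - 1 / eps)
      - (Real.sqrt 2 - Real.sqrt 1) * (1 - 1 / (d * eps))
      + lam * ((2 : ℝ) ^ (1 - 1 / eps) - (2 : ℝ) ^ (1 - 1 / ((d : ℝ) * eps)))
      ≥ 1 / 2 :=
  stmt_6_general lam hlam d eps heps
end

section
/- For all real λ ≥ 0, the quantity λ·(2^{1 − 1/((1+λ)·e^{e^e})} − 2) is greater than or equal to −e^{−e^e}·log(4), and hence greater than or equal to −0.01. -/
/-!
Write `x = 1 / ((1 + λ) E)` with `E = e^{e^e}`. Since `2^{1-x} = 2 e^{-x log 2} ≥ 2 (1 - x log 2)`,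
the quantity is at least `-2 log 2 · λ x`, and `λ x = λ / ((1 + λ) E) ≤ 1 / E`, which gives the bound
`-e^{-e^e} log 4`. The numerical bound follows from `E ≥ e^7 > 1000` and `log 4 < 1.39`.
-/

open Real

lemma mul_one_sub_mul_log_le_rpow_one_sub {b : ℝ} (hb : 0 < b) (x : ℝ) :
    b * (1 - x * log b) ≤ b ^ (1 - x) := by
  have hsplit : b ^ (1 - x) = b * exp (-(x * log b)) := by
    rw [rpow_def_of_pos hb, show log b * (1 - x) = log b + -(x * log b) by ring, exp_add,
      exp_log hb]
  rw [hsplit]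
  gcongr
  linarith [add_one_le_exp (-(x * log b))]

lemma mul_div_one_add_mul_le_inv {lam c : ℝ} (hlam : 0 ≤ lam) (hc : 0 < c) :
    lam * (1 / ((1 + lam) * c)) ≤ c⁻¹ := by
  rw [mul_one_div, div_le_iff₀ (by positivity)]
  nlinarith [inv_mul_cancel₀ hc.ne', inv_pos.mpr hc]

lemma mul_rpow_one_sub_inv_sub_ge {b c lam : ℝ} (hb : 1 ≤ b) (hc : 0 < c) (hlam : 0 ≤ lam) :
    lam * (b ^ (1 - 1 / ((1 + lam) * c)) - b) ≥ -c⁻¹ * (b * log b) := by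
  set x := 1 / ((1 + lam) * c)
  have hblogb : 0 ≤ b * log b := mul_nonneg (by linarith) (log_nonneg hb)
  calc lam * (b ^ (1 - x) - b)
      ≥ lam * (b * (1 - x * log b) - b) := by
        gcongr; exact mul_one_sub_mul_log_le_rpow_one_sub (by linarith) x
    _ = -(lam * x) * (b * log b) := by ring
    _ ≥ -c⁻¹ * (b * log b) := by
        gcongr; exact mul_div_one_add_mul_le_inv hlam hc

lemma thousand_lt_exp_exp_exp_one : (1000 : ℝ) < exp (exp (exp 1)) := by
  have he : (2.7 : ℝ) < exp 1 := lt_trans (by norm_num) exp_one_gt_d9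
  have hee : (7 : ℝ) < exp (exp 1) :=
    calc (7 : ℝ) < exp 1 * exp 1 := by nlinarith
      _ = exp 2 := by rw [← exp_add]; norm_num
      _ < exp (exp 1) := exp_lt_exp.mpr (by linarith)
  calc (1000 : ℝ) < 2.7 ^ 7 := by norm_num
    _ < exp 1 ^ 7 := by gcongr
    _ = exp 7 := by rw [← exp_nat_mul]; norm_num
    _ < exp (exp (exp 1)) := exp_lt_exp.mpr hee

theorem stmt_7 (lam : ℝ) (hlam : 0 ≤ lam) :
    lam * ((2 : ℝ) ^ (1 - 1 / ((1 + lam) * Real.exp (Real.exp (Real.exp 1)))) - 2)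
        ≥ -Real.exp (-(Real.exp (Real.exp 1))) * Real.log 4
    ∧ lam * ((2 : ℝ) ^ (1 - 1 / ((1 + lam) * Real.exp (Real.exp (Real.exp 1)))) - 2)
        ≥ -0.01 := by
  set E := exp (exp (exp 1))
  have hlog4 : log 4 = 2 * log 2 := by
    rw [show (4 : ℝ) = 2 ^ 2 by norm_num, log_pow]; norm_num
  have hbound : lam * ((2 : ℝ) ^ (1 - 1 / ((1 + lam) * E)) - 2) ≥ -E⁻¹ * log 4 := by
    rw [hlog4]
    exact mul_rpow_one_sub_inv_sub_ge one_le_two (exp_pos _) hlam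
  rw [exp_neg]
  refine ⟨hbound, le_trans ?_ hbound⟩
  have hE : 1000 < E := thousand_lt_exp_exp_exp_one
  have hlog4_lt : log 4 < 1.4 := by rw [hlog4]; linarith [log_two_lt_d9]
  have hinv : E⁻¹ < 1 / 1000 := by rw [inv_eq_one_div]; gcongr
  nlinarith [log_nonneg (show (1 : ℝ) ≤ 4 by norm_num), inv_pos.mpr (exp_pos (exp (exp 1)))]
end

section
/- For integers m ≥ 2 and q ≥ 2, with g(x) = 1/log₂(x+1), we have g(q) − g(mq − m − ⌊mq/4⌋ + 2) ≥ (2/5) · (1/log₂²(mq)). -/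
/-! With `N = mq - m - ⌊mq/4⌋ + 2` one has `4(q+1) ≤ 3(N+1)` and `q+1, N+1 ≤ mq`. Hence
`a = log₂(q+1)` and `b = log₂(N+1)` satisfy `b - a ≥ log₂(4/3) ≥ 2/5` and `a, b ≤ c = log₂(mq)`, so
`1/a - 1/b = (b-a)/(ab) ≥ (2/5)/c²`. -/

open Real

lemma mul_one_div_sq_le_one_div_sub_one_div {a b c d : ℝ} (ha : 0 < a) (hac : a ≤ c) (hbc : b ≤ c)
    (hd : d ≤ b - a) (hd0 : 0 ≤ d) : d * (1 / c ^ 2) ≤ 1 / a - 1 / b := by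
  have hb : 0 < b := by linarith
  have hab : a * b ≤ c ^ 2 := by nlinarith
  calc d * (1 / c ^ 2) ≤ d * (1 / (a * b)) := by gcongr
    _ ≤ (b - a) * (1 / (a * b)) := by gcongr
    _ = 1 / a - 1 / b := by field_simp

lemma logb_le_logb_sub_logb_of_mul_le {b r x y : ℝ} (hb : 1 < b) (hr : 0 < r) (hx : 0 < x)
    (hy : r * x ≤ y) : logb b r ≤ logb b y - logb b x := by
  have h := logb_le_logb_of_le hb (by positivity) hy
  rw [logb_mul hr.ne' hx.ne'] at h
  linarith

lemma two_fifths_le_logb_two_four_thirds : (2 : ℝ) / 5 ≤ logb 2 (4 / 3) := by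
  rw [le_logb_iff_rpow_le one_lt_two (by norm_num)]
  have h : ((2 : ℝ) ^ ((2 : ℝ) / 5)) ^ (5 : ℕ) = 4 := by
    rw [← rpow_natCast, ← rpow_mul zero_le_two]
    norm_num
  refine le_of_pow_le_pow_left₀ (n := 5) (by norm_num) (by norm_num) ?_
  rw [h]
  norm_num

lemma four_mul_succ_le_three_mul_succ_and_succ_le {m q : ℕ} (hm : 2 ≤ m) (hq : 2 ≤ q) :
    4 * (q + 1) ≤ 3 * (m * q - m - m * q / 4 + 2 + 1) ∧ m * q - m - m * q / 4 + 2 + 1 ≤ m * q := by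
  have h1 : 2 * m + 2 * q ≤ m * q + 4 := by nlinarith
  have h2 : 2 * q ≤ m * q := Nat.mul_le_mul_right q hm
  have h3 : m * 2 ≤ m * q := Nat.mul_le_mul_left m hq
  omega

theorem stmt_8 (m q : ℕ) (hm : 2 ≤ m) (hq : 2 ≤ q) :
    1 / Real.logb 2 ((q : ℝ) + 1)
      - 1 / Real.logb 2 (((m * q - m - m * q / 4 + 2 : ℕ) : ℝ) + 1)
      ≥ (2 / 5) * (1 / (Real.logb 2 ((m : ℝ) * q)) ^ 2) := by
  obtain ⟨hgap, hN⟩ := four_mul_succ_le_three_mul_succ_and_succ_le hm hq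
  set N := m * q - m - m * q / 4 + 2
  have hq1 : (1 : ℝ) < q + 1 := by norm_cast; omega
  have hgap' : 4 / 3 * ((q : ℝ) + 1) ≤ N + 1 := by
    have h : ((4 * (q + 1) : ℕ) : ℝ) ≤ (3 * (N + 1) : ℕ) := by exact_mod_cast hgap
    push_cast at h
    linarith
  have hN' : (N : ℝ) + 1 ≤ m * q := by exact_mod_cast hN
  refine mul_one_div_sq_le_one_div_sub_one_div (logb_pos one_lt_two hq1)
    (logb_le_logb_of_le one_lt_two (by linarith) (by linarith))
    (logb_le_logb_of_le one_lt_two (by linarith) hN') ?_ (by norm_num)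
  exact two_fifths_le_logb_two_four_thirds.trans
    (logb_le_logb_sub_logb_of_mul_le one_lt_two (by norm_num) (by linarith) hgap')
end

section
/- For all integers m ≥ 2, q ≥ 2 and all real λ ≥ 0 and s ∈ [0.01, 1], with ξ = (1+λ)^{−1}·e^{−e·mq}, we have λ·q·(2^{s−ξ} − 2^{s}) ≥ −q·e^{−e·mq}·log(4). -/
/-!
Since `2^{-ξ} ≥ 1 - ξ log 2` and `2^s ≤ 2`, we get `2^{s-ξ} - 2^s ≥ -ξ log 4`; multiplying by `λ`
and using `λ (1 + λ)⁻¹ ≤ 1` bounds `λ ξ` by `e^{-e m q}`.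
-/

open Real

lemma Real.rpow_mul_neg_mul_log_le_rpow_sub_sub_rpow {b : ℝ} (hb : 0 < b) (s x : ℝ) :
    b ^ s * -(x * log b) ≤ b ^ (s - x) - b ^ s := by
  have hexp : 1 - x * log b ≤ b ^ (-x) := by
    rw [rpow_def_of_pos hb]
    linarith [add_one_le_exp (log b * -x)]
  rw [sub_eq_add_neg s x, rpow_add hb]
  nlinarith [rpow_pos_of_pos hb s]

lemma mul_inv_one_add_mul_le {lam E : ℝ} (hlam : 0 ≤ lam) (hE : 0 ≤ E) :
    lam * ((1 + lam)⁻¹ * E) ≤ E := by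
  rw [← mul_assoc, ← div_eq_mul_inv]
  exact mul_le_of_le_one_left hE (div_le_one_of_le₀ (by linarith) (by linarith))

lemma neg_mul_log_four_le_mul_two_rpow_sub_sub {lam s E : ℝ} (hlam : 0 ≤ lam) (hs : s ≤ 1)
    (hE : 0 ≤ E) :
    -E * log 4 ≤ lam * ((2 : ℝ) ^ (s - (1 + lam)⁻¹ * E) - (2 : ℝ) ^ s) := by
  set xi := (1 + lam)⁻¹ * E
  have hxi : 0 ≤ xi := by positivity
  have hlog4 : log 4 = 2 * log 2 := by
    rw [show (4 : ℝ) = 2 ^ 2 by norm_num, log_pow]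
    push_cast
    ring
  have h2s : (2 : ℝ) ^ s ≤ 2 := by
    simpa using rpow_le_rpow_of_exponent_le (by norm_num : (1 : ℝ) ≤ 2) hs
  have hdiff : -(xi * log 4) ≤ (2 : ℝ) ^ (s - xi) - (2 : ℝ) ^ s :=
    calc -(xi * log 4) = 2 * -(xi * log 2) := by rw [hlog4]; ring
      _ ≤ (2 : ℝ) ^ s * -(xi * log 2) :=
        mul_le_mul_of_nonpos_right h2s (by nlinarith [log_pos (by norm_num : (1 : ℝ) < 2)])
      _ ≤ _ := rpow_mul_neg_mul_log_le_rpow_sub_sub_rpow (by norm_num) s xi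
  have hlog4_pos : 0 < log 4 := log_pos (by norm_num)
  calc -E * log 4 ≤ -(lam * xi) * log 4 := by
        gcongr
        exact mul_inv_one_add_mul_le hlam hE
    _ = lam * -(xi * log 4) := by ring
    _ ≤ _ := mul_le_mul_of_nonneg_left hdiff hlam

theorem stmt_16_general (m q : ℕ)
    (lam : ℝ) (hlam : 0 ≤ lam) (s : ℝ) (hs2 : s ≤ 1)
    (xi : ℝ) (hxi : xi = (1 + lam)⁻¹ * Real.exp (-(Real.exp 1 * ((m : ℝ) * q)))) :
    lam * (q : ℝ) * ((2 : ℝ) ^ (s - xi) - (2 : ℝ) ^ (s : ℝ))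
      ≥ -(q : ℝ) * Real.exp (-(Real.exp 1 * ((m : ℝ) * q))) * Real.log 4 := by
  subst hxi
  have h := neg_mul_log_four_le_mul_two_rpow_sub_sub hlam hs2 (exp_pos (-(rexp 1 * (m * q)))).le
  have hq : (0 : ℝ) ≤ q := Nat.cast_nonneg q
  calc -(q : ℝ) * rexp (-(rexp 1 * (m * q))) * log 4
      = q * (-rexp (-(rexp 1 * (m * q))) * log 4) := by ring
    _ ≤ q * (lam * ((2 : ℝ) ^ (s - (1 + lam)⁻¹ * rexp (-(rexp 1 * (m * q)))) - (2 : ℝ) ^ s)) :=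
      mul_le_mul_of_nonneg_left h hq
    _ = _ := by ring

theorem stmt_16 (m q : ℕ) (hm : 2 ≤ m) (hq : 2 ≤ q)
    (lam : ℝ) (hlam : 0 ≤ lam) (s : ℝ) (hs1 : 0.01 ≤ s) (hs2 : s ≤ 1)
    (xi : ℝ) (hxi : xi = (1 + lam)⁻¹ * Real.exp (-(Real.exp 1 * ((m : ℝ) * q)))) :
    lam * (q : ℝ) * ((2 : ℝ) ^ (s - xi) - (2 : ℝ) ^ (s : ℝ))
      ≥ -(q : ℝ) * Real.exp (-(Real.exp 1 * ((m : ℝ) * q))) * Real.log 4 :=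
  stmt_16_general m q lam hlam s hs2 xi hxi
end
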